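/- (Strengthening for the λ-calculus with unknowns) If Γ, c:χ ⊢ r : ψ and c ∈ 𝔸↑ with c ∉ fa(r), then Γ ⊢ r : ψ. -/

import Mathlib

/-! λ-calculus with existential variables (unknowns): syntax and typing. -/

/-- Atoms: a countably infinite set, partitioned `𝔸 = 𝔸↓ ⊎ 𝔸↑`. -/
abbrev Atom := ℕ

/-- `𝔸↓`: the atoms that may be captured by instantiation (here: even numbers). -/
def Adown : Set Atom := {a | a % 2 = 0}

/-- `𝔸↑`: the atoms that may be λ-abstracted (here: odd numbers). -/
def Aup : Set Atom := {a | a % 2 = 1}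

/-- The set of atoms moved by a permutation. -/
def Nontriv (π : Equiv.Perm Atom) : Set Atom := {a | π a ≠ a}

/-- Simple types over a countably infinite set of base types. -/
inductive Ty : Type
  | base : ℕ → Ty
  | arr : Ty → Ty → Ty
deriving DecidableEq

/-- Terms of the λ-calculus with unknowns:
`r ::= a | C | X[b₁:=s₁,…,bₙ:=sₙ] | λc:φ.s | r s`. -/
inductive UTerm : Type
  | atom : Atom → UTerm
  | const : ℕ → Ty → UTerm
  | lam : Atom → Ty → UTerm → UTerm
  | app : UTerm → UTerm → UTerm
  | umeta : ℕ → List (Atom × UTerm) → UTerm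

/-- Permutation action on terms (for permutations moving only atoms in `𝔸↑`). -/
def UTerm.perm (π : Equiv.Perm Atom) : UTerm → UTerm
  | .atom a => .atom (π a)
  | .const c φ => .const c φ
  | .lam a φ r => .lam (π a) φ (r.perm π)
  | .app r s => .app (r.perm π) (s.perm π)
  | .umeta X ms => .umeta X (ms.attach.map fun p => (p.1.1, p.1.2.perm π))
decreasing_by
  all_goals simp_wf
  all_goals first
    | omega
    | (obtain ⟨⟨b, s⟩, hmem⟩ := p
       have := List.sizeOf_lt_of_mem hmem
       simp at this ⊢
       omega)

/-- Free atoms: `fa(X[bᵢ:=sᵢ]) = (𝔸↓ \ {bᵢ}) ∪ ⋃ᵢ fa(sᵢ)`. -/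
def UTerm.ufa : UTerm → Set Atom
  | .atom a => {a}
  | .const _ _ => ∅
  | .lam a _ r => r.ufa \ {a}
  | .app r s => r.ufa ∪ s.ufa
  | .umeta _ ms =>
      ms.attach.foldr (fun p S => p.1.2.ufa ∪ S)
        (Adown \ {b | b ∈ ms.map Prod.fst})
decreasing_by
  all_goals simp_wf
  all_goals first
    | omega
    | (obtain ⟨⟨b, s⟩, hmem⟩ := p
       have := List.sizeOf_lt_of_mem hmem
       simp at this ⊢
       omega)

/-- Free unknowns of a term. -/
def UTerm.ufv : UTerm → Set ℕ
  | .atom _ => ∅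
  | .const _ _ => ∅
  | .lam _ _ r => r.ufv
  | .app r s => r.ufv ∪ s.ufv
  | .umeta X ms => ms.attach.foldr (fun p S => p.1.2.ufv ∪ S) {X}
decreasing_by
  all_goals simp_wf
  all_goals first
    | omega
    | (obtain ⟨⟨b, s⟩, hmem⟩ := p
       have := List.sizeOf_lt_of_mem hmem
       simp at this ⊢
       omega)

/-- Capture-avoiding (level 1) simultaneous substitution `r[bᵢ := sᵢ]`, as a relation
(the freshness side conditions on λ-binders can always be achieved by α-renaming).
On a moderated unknown the substitution composes with the moderation,
garbage-collecting entries whose atom is not in `𝔸↓` or is shadowed. -/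
inductive USub (σ : List (Atom × UTerm)) : UTerm → UTerm → Prop
  | atomFound {b : Atom} {t : UTerm} :
      List.lookup b σ = some t → USub σ (.atom b) t
  | atomFree {b : Atom} :
      List.lookup b σ = none → USub σ (.atom b) (.atom b)
  | const {c : ℕ} {φ : Ty} : USub σ (.const c φ) (.const c φ)
  | app {r r' s s' : UTerm} :
      USub σ r r' → USub σ s s' → USub σ (.app r s) (.app r' s')
  | lam {c : Atom} {φ : Ty} {r r' : UTerm} :
      c ∈ Aup → (∀ p ∈ σ, c ≠ p.1 ∧ c ∉ p.2.ufa) →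
      USub σ r r' → USub σ (.lam c φ r) (.lam c φ r')
  | umeta {X : ℕ} {ms ms' : List (Atom × UTerm)} :
      ms.length = ms'.length →
      (∀ i (h : i < ms.length) (h' : i < ms'.length), (ms.get ⟨i, h⟩).1 = (ms'.get ⟨i, h'⟩).1) →
      (∀ i (h : i < ms.length) (h' : i < ms'.length), USub σ (ms.get ⟨i, h⟩).2 (ms'.get ⟨i, h'⟩).2) →
      USub σ (.umeta X ms)
        (.umeta X ((σ.filter fun p =>
            decide (p.1 % 2 = 0) && !((ms.map Prod.fst).contains p.1)) ++ ms'))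

/-- Type environments: finite functional sets of atomic typings `a : φ` and `X : φ`. -/
structure UEnv where
  atoms : Finset (Atom × Ty)
  unks : Finset (ℕ × Ty)

/-- Functionality of an environment. -/
def UFunctional (Γ : UEnv) : Prop :=
  (∀ ⦃a : Atom⦄ ⦃φ ψ : Ty⦄, (a, φ) ∈ Γ.atoms → (a, ψ) ∈ Γ.atoms → φ = ψ) ∧
  (∀ ⦃X : ℕ⦄ ⦃φ ψ : Ty⦄, (X, φ) ∈ Γ.unks → (X, ψ) ∈ Γ.unks → φ = ψ)

/-- Atom-domain of an environment. -/
def domA (Γ : UEnv) : Finset Atom := Γ.atoms.image Prod.fst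

/-- Unknown-domain of an environment. -/
def domX (Γ : UEnv) : Finset ℕ := Γ.unks.image Prod.fst

/-- Add an atomic typing `a : φ`. -/
def insertA (a : Atom) (φ : Ty) (Γ : UEnv) : UEnv := ⟨insert (a, φ) Γ.atoms, Γ.unks⟩

/-- Add a typing `X : φ` for an unknown. -/
def insertX (X : ℕ) (φ : Ty) (Γ : UEnv) : UEnv := ⟨Γ.atoms, insert (X, φ) Γ.unks⟩

/-- Typing rules (V), (C), (L), (A), (Meta) for the λ-calculus with unknowns. -/
inductive UTy : UEnv → UTerm → Ty → Prop
  | V {Γ a φ} : UFunctional Γ → (a, φ) ∈ Γ.atoms → UTy Γ (.atom a) φ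
  | C {Γ c φ} : UFunctional Γ → UTy Γ (.const c φ) φ
  | L {Γ a φ ψ r} : a ∈ Aup → a ∉ domA Γ →
      UTy (insertA a φ Γ) r ψ → UTy Γ (.lam a φ r) (.arr φ ψ)
  | A {Γ φ ψ r s} : UTy Γ r (.arr φ ψ) → UTy Γ s φ → UTy Γ (.app r s) ψ
  | Meta {Γ X φ ms} : UFunctional Γ → (X, φ) ∈ Γ.unks →
      (ms.map Prod.fst).Nodup →
      (∀ p ∈ ms, p.1 ∈ Adown) →
      (∀ p ∈ ms, ∃ ψ, (p.1, ψ) ∈ Γ.atoms) →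
      (∀ p ∈ ms, ∀ ψ, (p.1, ψ) ∈ Γ.atoms → UTy Γ p.2 ψ) →
      UTy Γ (.umeta X ms) φ

/-- β-equivalence for the λ-calculus with unknowns: the least congruence
(closed under (CongApp), (ξ) and (CongX)) containing `(λa:φ.r)t =β r[a := t]`,
on terms up to α-equivalence. -/
inductive UBeta : UTerm → UTerm → Prop
  | refl (r : UTerm) : UBeta r r
  | symm {r s} : UBeta r s → UBeta s r
  | trans {r s t} : UBeta r s → UBeta s t → UBeta r t
  | congApp {r r' s s'} : UBeta r r' → UBeta s s' → UBeta (.app r s) (.app r' s')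
  | xi {a φ s s'} : UBeta s s' → UBeta (.lam a φ s) (.lam a φ s')
  | congX {X : ℕ} {ms ms' : List (Atom × UTerm)} :
      ms.length = ms'.length →
      (∀ i (h : i < ms.length) (h' : i < ms'.length), (ms.get ⟨i, h⟩).1 = (ms'.get ⟨i, h'⟩).1) →
      (∀ i (h : i < ms.length) (h' : i < ms'.length), UBeta (ms.get ⟨i, h⟩).2 (ms'.get ⟨i, h'⟩).2) →
      UBeta (.umeta X ms) (.umeta X ms')
  | beta {a φ r t r'} : USub [(a, t)] r r' → UBeta (.app (.lam a φ r) t) r'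
  | alpha {a b φ r} : b ∈ Aup → b ∉ r.ufa →
      UBeta (.lam a φ r) (.lam b φ (r.perm (Equiv.swap b a)))

/-- Level 2 substitution `rθ` of terms for unknowns, as a relation; on a
moderated unknown `X[bᵢ:=sᵢ]θ = θ(X)[bᵢ:=sᵢθ]`, and the bound atom of a
λ-abstraction is chosen (in `𝔸↑`) avoiding the free atoms of the instantiated
unknowns, so the substitution is capturing only on `𝔸↓`-atoms. -/
inductive Sub2 (θ : ℕ → UTerm) : UTerm → UTerm → Prop
  | atom {a} : Sub2 θ (.atom a) (.atom a)
  | const {c φ} : Sub2 θ (.const c φ) (.const c φ)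
  | app {r r' s s'} : Sub2 θ r r' → Sub2 θ s s' → Sub2 θ (.app r s) (.app r' s')
  | lam {a φ r r'} : a ∈ Aup → (∀ X ∈ r.ufv, a ∉ (θ X).ufa) →
      Sub2 θ r r' → Sub2 θ (.lam a φ r) (.lam a φ r')
  | umeta {X : ℕ} {ms ms' : List (Atom × UTerm)} {t' : UTerm} :
      ms.length = ms'.length →
      (∀ i (h : i < ms.length) (h' : i < ms'.length), (ms.get ⟨i, h⟩).1 = (ms'.get ⟨i, h'⟩).1) →
      (∀ i (h : i < ms.length) (h' : i < ms'.length), Sub2 θ (ms.get ⟨i, h⟩).2 (ms'.get ⟨i, h'⟩).2) →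
      USub ms' (θ X) t' → Sub2 θ (.umeta X ms) t'

/-- The identity level 2 substitution maps `X` to `X` (with empty moderation). -/
def idSub2 : ℕ → UTerm := fun X => .umeta X []

lemma notMem_Adown_of_mem_Aup {a : Atom} (ha : a ∈ Aup) : a ∉ Adown :=
  fun h => Nat.zero_ne_one ((show a % 2 = 0 from h).symm.trans ha)

lemma subset_foldr_union_of_mem {α β : Type*} (g : α → Set β) (init : Set β) :
    ∀ {l : List α} {a : α}, a ∈ l → g a ⊆ l.foldr (fun p S => g p ∪ S) init
  | x :: xs, a, ha => by
    rcases List.mem_cons.mp ha with rfl | ha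
    · exact Set.subset_union_left
    · exact (subset_foldr_union_of_mem g init ha).trans Set.subset_union_right

lemma UTerm.ufa_subset_ufa_umeta {X : ℕ} {ms : List (Atom × UTerm)} {p : Atom × UTerm}
    (hp : p ∈ ms) : p.2.ufa ⊆ (UTerm.umeta X ms).ufa := by
  rw [UTerm.ufa]
  exact subset_foldr_union_of_mem (fun q => q.1.2.ufa) _ (List.mem_attach ms ⟨p, hp⟩)

lemma UFunctional.of_insertA {c : Atom} {χ : Ty} {Γ : UEnv}
    (h : UFunctional (insertA c χ Γ)) : UFunctional Γ :=
  ⟨fun _ _ _ ha hb => h.1 (Finset.mem_insert_of_mem ha) (Finset.mem_insert_of_mem hb), h.2⟩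

lemma mem_atoms_of_mem_insertA {c a : Atom} {χ φ : Ty} {Γ : UEnv}
    (h : (a, φ) ∈ (insertA c χ Γ).atoms) (hac : a ≠ c) : (a, φ) ∈ Γ.atoms := by
  rcases Finset.mem_insert.mp h with h | h
  · exact absurd (congrArg Prod.fst h) hac
  · exact h

lemma notMem_domA_of_notMem_domA_insertA {c a : Atom} {χ : Ty} {Γ : UEnv}
    (h : a ∉ domA (insertA c χ Γ)) : a ∉ domA Γ :=
  fun ha => h (Finset.image_subset_image (Finset.subset_insert _ _) ha)

lemma insertA_comm (a c : Atom) (φ χ : Ty) (Γ : UEnv) :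
    insertA a φ (insertA c χ Γ) = insertA c χ (insertA a φ Γ) := by
  simp only [insertA, Finset.insert_comm]

theorem strengthening_general (Γ : UEnv) (r : UTerm) (ψ χ : Ty) (c : Atom)
    (h : UTy (insertA c χ Γ) r ψ) (hup : c ∈ Aup) (hfa : c ∉ r.ufa) :
    UTy Γ r ψ := by
  generalize hΔ : insertA c χ Γ = Δ at h
  induction h generalizing Γ with subst hΔ
  | V hf hmem =>
    rw [UTerm.ufa, Set.mem_singleton_iff] at hfa
    exact .V hf.of_insertA (mem_atoms_of_mem_insertA hmem (Ne.symm hfa))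
  | C hf => exact .C hf.of_insertA
  | @L _ a φ _ _ ha hdom _ ih =>
    have hac : a ≠ c := by rintro rfl; exact hdom (by simp [domA, insertA])
    rw [UTerm.ufa, Set.mem_sdiff, Set.mem_singleton_iff, not_and_not_right] at hfa
    exact .L ha (notMem_domA_of_notMem_domA_insertA hdom)
      (ih _ (fun hc => hac (hfa hc).symm) (insertA_comm c a χ φ Γ))
  | A _ _ ihr ihs =>
    rw [UTerm.ufa, Set.mem_union, not_or] at hfa
    exact .A (ihr Γ hfa.1 rfl) (ihs Γ hfa.2 rfl)
  | @Meta _ _ _ ms hf hX hnd hdown hex _ ih =>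
    -- (Meta) needs the moderated atoms typed in `Γ`; they lie in `𝔸↓`, so none of them is `c`.
    have hne : ∀ p ∈ ms, p.1 ≠ c := fun p hp hpc =>
      notMem_Adown_of_mem_Aup hup (hpc ▸ hdown p hp)
    refine .Meta hf.of_insertA hX hnd hdown (fun p hp => ?_) (fun p hp ψ' hψ' => ?_)
    · obtain ⟨ψ', hψ'⟩ := hex p hp
      exact ⟨ψ', mem_atoms_of_mem_insertA hψ' (hne p hp)⟩
    · exact ih p hp ψ' (Finset.mem_insert_of_mem hψ') Γ
        (fun hc => hfa (UTerm.ufa_subset_ufa_umeta hp hc)) rfl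

/-- **Strengthening** for the λ-calculus with unknowns: if `Γ, c:χ ⊢ r : ψ` with
`c ∈ 𝔸↑` and `c ∉ fa(r)`, then `Γ ⊢ r : ψ`. -/
theorem strengthening (Γ : UEnv) (r : UTerm) (ψ χ : Ty) (c : Atom)
    (hc : c ∉ domA Γ)
    (h : UTy (insertA c χ Γ) r ψ) (hup : c ∈ Aup) (hfa : c ∉ r.ufa) :
    UTy Γ r ψ :=
  strengthening_general Γ r ψ χ c h hup hfa
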